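/- Compatibility of the linear metric: Assume the curvature condition (Curv1) holds at every stage. Then for every f = (f_1, …, f_H) ∈ F^H with greedy policy π, every h = 2, …, H−1, and every g ∈ F with ‖g‖_h > 0: ‖(P_{h−1}^π − M*_{h−1}) g‖_{h−1} ≤ d_h(f_h, q*_h) ‖g‖_h, where d_h(f, g) = (√d κ̄_h / ‖q*_h‖_h) ‖f − g‖_h. -/

import Mathlib

open MeasureTheory ProbabilityTheory

noncomputable section

namespace RLStability

variable {S A : Type*} [MeasurableSpace S] [MeasurableSpace A] [Nonempty A]

/-- Auxiliary occupation-measure sequence: `occAux ξ P π n` is the joint law of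
`(S_{n+1}, A_{n+1})` under initial distribution `ξ` and policy `π`. -/
def occAux (ξ : Measure S) (P : ℕ → Kernel (S × A) S) (π : ℕ → S → A) :
    ℕ → Measure (S × A)
  | 0 => ξ.map fun s => (s, π 1 s)
  | n + 1 =>
      (occAux ξ P π n).bind fun sa => ((P (n + 1)) sa).map fun s' => (s', π (n + 2) s')

/-- Occupation measure of `(S_h, A_h)` under policy `π`, for stages `h ≥ 1`. -/
def occ (ξ : Measure S) (P : ℕ → Kernel (S × A) S) (π : ℕ → S → A) (h : ℕ) :
    Measure (S × A) :=
  occAux ξ P π (h - 1)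

/-- `E_π[g(S_h, A_h)]`. -/
def Epol (ξ : Measure S) (P : ℕ → Kernel (S × A) S) (π : ℕ → S → A) (h : ℕ)
    (g : S × A → ℝ) : ℝ :=
  ∫ sa, g sa ∂(occ ξ P π h)

/-- Expected return `J(π)` over horizon `H`. -/
def expReturn (ξ : Measure S) (P : ℕ → Kernel (S × A) S) (r : ℕ → S × A → ℝ)
    (H : ℕ) (π : ℕ → S → A) : ℝ :=
  ∑ h ∈ Finset.Icc 1 H, Epol ξ P π h (r h)

/-- One-step transition operator `P_h^π`. -/
def Ppol (P : ℕ → Kernel (S × A) S) (π : ℕ → S → A) (h : ℕ) (f : S × A → ℝ) :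
    S × A → ℝ :=
  fun sa => ∫ s', f (s', π (h + 1) s') ∂((P h) sa)

/-- `PmultiAux P π k h g` applies `k` steps of the transition operators starting at stage `h`. -/
def PmultiAux (P : ℕ → Kernel (S × A) S) (π : ℕ → S → A) :
    ℕ → ℕ → (S × A → ℝ) → S × A → ℝ
  | 0, _, g => g
  | k + 1, h, g => Ppol P π h (PmultiAux P π k (h + 1) g)

/-- Multi-step transition operator `P^π_{h → h'} = P_h^π ⋯ P_{h'-1}^π`. -/
def Pmulti (P : ℕ → Kernel (S × A) S) (π : ℕ → S → A) (h h' : ℕ)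
    (g : S × A → ℝ) : S × A → ℝ :=
  PmultiAux P π (h' - h) h g

/-- Bellman optimality operator `T_h^*`. -/
def Tstar (P : ℕ → Kernel (S × A) S) (r : ℕ → S × A → ℝ) (h : ℕ)
    (f : S × A → ℝ) : S × A → ℝ :=
  fun sa => r h sa + ∫ s', (⨆ a' : A, f (s', a')) ∂((P h) sa)

def qstarAux (P : ℕ → Kernel (S × A) S) (r : ℕ → S × A → ℝ) (H : ℕ) :
    ℕ → S × A → ℝ
  | 0 => r H
  | k + 1 => Tstar P r (H - (k + 1)) (qstarAux P r H k)

/-- Optimal Q-function at stage `h`: `q*_H = r_H`, `q*_h = T_h^* q*_{h+1}`. -/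
def qstar (P : ℕ → Kernel (S × A) S) (r : ℕ → S × A → ℝ) (H h : ℕ) :
    S × A → ℝ :=
  qstarAux P r H (H - h)

/-- `π` is greedy with respect to the tuple of Q-functions `f = (f_1, …, f_H)`. -/
def IsGreedy (H : ℕ) (f : ℕ → S × A → ℝ) (π : ℕ → S → A) : Prop :=
  ∀ h ∈ Finset.Icc 1 H, ∀ s : S, f h (s, π h s) = ⨆ a : A, f h (s, a)

/-- Occupation-measure norm `‖f‖_h` (with respect to the policy `πs`). -/
def onorm (ξ : Measure S) (P : ℕ → Kernel (S × A) S) (πs : ℕ → S → A) (h : ℕ)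
    (f : S × A → ℝ) : ℝ :=
  Real.sqrt (∫ sa, f sa ^ 2 ∂(occ ξ P πs h))

/-- Bounded measurable real functions on the state–action space. -/
def BddMeas (f : S × A → ℝ) : Prop :=
  Measurable f ∧ ∃ C : ℝ, ∀ x, |f x| ≤ C

/-- The Minkowski difference class `∂F = F - F`. -/
def diffSet (F : Set (S × A → ℝ)) : Set (S × A → ℝ) :=
  {g | ∃ f₁ ∈ F, ∃ f₂ ∈ F, g = f₁ - f₂}

open Matrix in
/-- The linear function class `F = {⟨φ(·), w⟩ : w ∈ ℝ^d}`. -/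
def linF (dd : ℕ) (φ : S × A → Fin dd → ℝ) : Set (S × A → ℝ) :=
  {f | ∃ w : Fin dd → ℝ, f = fun sa => φ sa ⬝ᵥ w}

/-- The stage-`h` feature covariance matrix `Σ_h` under the optimal policy. -/
def covMat (dd : ℕ) (ξ : Measure S) (P : ℕ → Kernel (S × A) S) (πs : ℕ → S → A)
    (φ : S × A → Fin dd → ℝ) (h : ℕ) : Matrix (Fin dd) (Fin dd) ℝ :=
  Matrix.of fun i j => ∫ sa, φ sa i * φ sa j ∂(occ ξ P πs h)

open Matrix in
/-- The norm `‖x‖_M = (xᵀ M x)^{1/2}` induced by a (positive definite) matrix `M`. -/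
def mnorm {dd : ℕ} (M : Matrix (Fin dd) (Fin dd) ℝ) (x : Fin dd → ℝ) : ℝ :=
  Real.sqrt (x ⬝ᵥ M.mulVec x)

/-- `κ̄_h = (E_{π*}[κ_h(S_h)²])^{1/2}`. -/
def kbar (ξ : Measure S) (P : ℕ → Kernel (S × A) S) (πs : ℕ → S → A)
    (κ : ℕ → S → ℝ) (h : ℕ) : ℝ :=
  Real.sqrt (∫ sa, κ h sa.1 ^ 2 ∂(occ ξ P πs h))

/-- The metric `d_h(f, g) = (√d κ̄_h / ‖q*_h‖_h) ‖f − g‖_h` used with linear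
function approximation. -/
def dlin (dd : ℕ) (ξ : Measure S) (P : ℕ → Kernel (S × A) S) (πs : ℕ → S → A)
    (r : ℕ → S × A → ℝ) (H : ℕ) (κ : ℕ → S → ℝ) (h : ℕ) (f g : S × A → ℝ) : ℝ :=
  Real.sqrt dd * kbar ξ P πs κ h / onorm ξ P πs h (qstar P r H h) *
    onorm ξ P πs h (fun sa => f sa - g sa)

section Helpers

open Matrix

lemma integrable_of_bdd' {α : Type*} [MeasurableSpace α] {μ : Measure α} [IsFiniteMeasure μ]
    {f : α → ℝ} (hf : Measurable f) {C : ℝ} (hC : ∀ x, |f x| ≤ C) : Integrable f μ :=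
  (integrable_const C).mono' hf.aestronglyMeasurable (ae_of_all _ fun x => by
    simpa [Real.norm_eq_abs] using hC x)

lemma dot_symm {n : ℕ} {N : Matrix (Fin n) (Fin n) ℝ} (hN : Nᵀ = N) (a b : Fin n → ℝ) :
    a ⬝ᵥ N.mulVec b = (N.mulVec a) ⬝ᵥ b := by
  rw [Matrix.dotProduct_mulVec]
  nth_rewrite 1 [← hN]
  rw [Matrix.vecMul_transpose]

lemma psd_dot_sq_le {n : ℕ} {M : Matrix (Fin n) (Fin n) ℝ} (hM : M.PosSemidef)
    (u v : Fin n → ℝ) :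
    (u ⬝ᵥ M.mulVec v)^2 ≤ (u ⬝ᵥ M.mulVec u) * (v ⬝ᵥ M.mulVec v) := by
  have hsymm : Mᵀ = M := hM.1
  have key : ∀ t : ℝ, 0 ≤ (v ⬝ᵥ M.mulVec v) * (t*t) + (2 * (u ⬝ᵥ M.mulVec v)) * t
      + u ⬝ᵥ M.mulVec u := by
    intro t
    have h := hM.dotProduct_mulVec_nonneg (u + t • v)
    simp only [star_trivial] at h
    have hexp : (u + t • v) ⬝ᵥ M.mulVec (u + t • v)
        = u ⬝ᵥ M.mulVec u + t * (u ⬝ᵥ M.mulVec v) + t * (v ⬝ᵥ M.mulVec u)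
          + (t*t) * (v ⬝ᵥ M.mulVec v) := by
      rw [Matrix.mulVec_add, Matrix.mulVec_smul]
      simp [dotProduct_add, add_dotProduct, smul_dotProduct,
        dotProduct_smul, smul_eq_mul]
      ring
    have hsw : v ⬝ᵥ M.mulVec u = u ⬝ᵥ M.mulVec v := by
      rw [dot_symm hsymm, dotProduct_comm]
    rw [hexp, hsw] at h
    linarith
  have hd := discrim_le_zero key
  rw [discrim] at hd
  nlinarith [hd]

lemma pd_abs_dot_le {n : ℕ} {M : Matrix (Fin n) (Fin n) ℝ} (hM : M.PosDef)
    (x w : Fin n → ℝ) : |x ⬝ᵥ w| ≤ mnorm M⁻¹ x * mnorm M w := by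
  have hsymm : Mᵀ = M := hM.1
  have hinv : (M⁻¹).PosDef := hM.inv
  have hsymm' : (M⁻¹)ᵀ = M⁻¹ := hinv.1
  have hu : IsUnit M := hM.isUnit
  have hMM : M * M⁻¹ = 1 := Matrix.mul_nonsing_inv M ((Matrix.isUnit_iff_isUnit_det M).1 hu)
  have hMM' : M⁻¹ * M = 1 := Matrix.nonsing_inv_mul M ((Matrix.isUnit_iff_isUnit_det M).1 hu)
  set u := M⁻¹.mulVec x with hu_def
  have e1 : u ⬝ᵥ M.mulVec w = x ⬝ᵥ w := by
    rw [hu_def, ← dot_symm hsymm' x (M.mulVec w), Matrix.mulVec_mulVec, hMM', Matrix.one_mulVec]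
  have e2 : u ⬝ᵥ M.mulVec u = x ⬝ᵥ M⁻¹.mulVec x := by
    rw [hu_def, Matrix.mulVec_mulVec, hMM, Matrix.one_mulVec, dotProduct_comm]
  have hcs := psd_dot_sq_le hM.posSemidef u w
  rw [e1, e2] at hcs
  have h1 : 0 ≤ x ⬝ᵥ M⁻¹.mulVec x := by simpa using hinv.posSemidef.dotProduct_mulVec_nonneg x
  calc |x ⬝ᵥ w| = Real.sqrt ((x ⬝ᵥ w)^2) := (Real.sqrt_sq_eq_abs _).symm
    _ ≤ Real.sqrt ((x ⬝ᵥ M⁻¹.mulVec x) * (w ⬝ᵥ M.mulVec w)) := Real.sqrt_le_sqrt hcs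
    _ = mnorm M⁻¹ x * mnorm M w := by rw [Real.sqrt_mul h1, mnorm, mnorm]

lemma sq_integral_le' {α : Type*} [MeasurableSpace α] {μ : Measure α} [IsProbabilityMeasure μ]
    {f : α → ℝ} (hf : Measurable f) {C : ℝ} (hC : ∀ x, |f x| ≤ C) :
    (∫ x, f x ∂μ)^2 ≤ ∫ x, f x ^ 2 ∂μ := by
  have hif : Integrable f μ := integrable_of_bdd' hf hC
  have hif2 : Integrable (fun x => f x ^ 2) μ := integrable_of_bdd' (hf.pow_const 2)
    (C := C^2) (fun x => by
      rw [abs_pow]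
      exact pow_le_pow_left₀ (abs_nonneg _) (hC x) 2)
  set m := ∫ x, f x ∂μ with hm
  have h0 : 0 ≤ ∫ x, (f x - m)^2 ∂μ := integral_nonneg fun x => sq_nonneg _
  have hexp : ∫ x, (f x - m)^2 ∂μ = (∫ x, f x ^ 2 ∂μ) - 2*m*m + m^2 := by
    have heq : ∀ x, (f x - m)^2 = f x ^ 2 - (2*m)*f x + m^2 := fun x => by ring
    simp_rw [heq]
    have e1 : Integrable (fun x => f x ^ 2 - 2*m*f x) μ := hif2.sub (hif.const_mul _)
    rw [integral_add e1 (integrable_const _),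
      integral_sub hif2 (hif.const_mul _), integral_const_mul, integral_const]
    simp [← hm]
  nlinarith [h0, hexp]

lemma abs_integral_le_of_bdd {α : Type*} [MeasurableSpace α] (μ : Measure α)
    [IsProbabilityMeasure μ] {f : α → ℝ} (hfm : Measurable f) {C : ℝ}
    (hC : ∀ x, |f x| ≤ C) : |∫ x, f x ∂μ| ≤ C := by
  calc |∫ x, f x ∂μ| ≤ ∫ x, |f x| ∂μ := by
        simpa [Real.norm_eq_abs] using norm_integral_le_integral_norm (μ := μ) f
    _ ≤ ∫ _x, C ∂μ := integral_mono
        (integrable_of_bdd' hfm.abs (C := C) (fun x => by simpa [abs_abs] using hC x))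
        (integrable_const C) hC
    _ = C := by simp

lemma integral_bind_kernel {α β : Type*} [MeasurableSpace α] [MeasurableSpace β]
    (μ : Measure α) [IsFiniteMeasure μ] (κ : Kernel α β) [IsMarkovKernel κ]
    {f : β → ℝ} (hf : Measurable f) (h0 : ∀ x, 0 ≤ f x) {C : ℝ} (hC : ∀ x, f x ≤ C) :
    ∫ b, f b ∂(μ.bind κ) = ∫ a, (∫ b, f b ∂(κ a)) ∂μ := by
  have hmκ : Measurable (κ : α → Measure β) := κ.measurable
  have hF : Measurable fun b => ENNReal.ofReal (f b) := hf.ennreal_ofReal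
  have hG : Measurable fun a => ∫⁻ b, ENNReal.ofReal (f b) ∂(κ a) := by
    have h' : Measurable fun (p : α × β) => ENNReal.ofReal (f p.2) := hF.comp measurable_snd
    exact h'.lintegral_kernel_prod_right'
  have hGbound : ∀ a, (∫⁻ b, ENNReal.ofReal (f b) ∂(κ a)) ≤ ENNReal.ofReal C := fun a => by
    calc ∫⁻ b, ENNReal.ofReal (f b) ∂(κ a) ≤ ∫⁻ _, ENNReal.ofReal C ∂(κ a) :=
          lintegral_mono fun b => ENNReal.ofReal_le_ofReal (hC b)
      _ = ENNReal.ofReal C := by simp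
  rw [integral_eq_lintegral_of_nonneg_ae (ae_of_all _ h0) hf.aestronglyMeasurable,
    Measure.lintegral_bind hmκ.aemeasurable hF.aemeasurable]
  have heq : ∀ a, ∫ b, f b ∂(κ a) = (∫⁻ b, ENNReal.ofReal (f b) ∂(κ a)).toReal := fun a =>
    integral_eq_lintegral_of_nonneg_ae (ae_of_all _ h0) hf.aestronglyMeasurable
  simp_rw [heq]
  rw [integral_toReal hG.aemeasurable
    (ae_of_all _ fun a => lt_of_le_of_lt (hGbound a) ENNReal.ofReal_lt_top)]

lemma occAux_isProb (ξ : Measure S) [IsProbabilityMeasure ξ]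
    (P : ℕ → Kernel (S × A) S) [∀ h, IsMarkovKernel (P h)]
    (π : ℕ → S → A) (hπ : ∀ h, Measurable (π h)) :
    ∀ n, IsProbabilityMeasure (occAux ξ P π n) := by
  intro n
  induction n with
  | zero =>
    rw [occAux]
    exact Measure.isProbabilityMeasure_map (measurable_id.prodMk (hπ 1)).aemeasurable
  | succ n ih =>
    haveI := ih
    constructor
    have hemb : Measurable fun s' : S => (s', π (n + 2) s') := measurable_id.prodMk (hπ _)
    have hm : Measurable fun sa : S × A => ((P (n+1)) sa).map fun s' => (s', π (n + 2) s') :=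
      (Measure.measurable_map _ hemb).comp (P (n+1)).measurable
    rw [occAux, Measure.bind_apply MeasurableSet.univ hm.aemeasurable]
    have huniv : ∀ sa : S × A,
        (((P (n+1)) sa).map fun s' => (s', π (n + 2) s')) Set.univ = 1 := by
      intro sa
      rw [Measure.map_apply hemb MeasurableSet.univ]
      simp
    simp_rw [huniv]
    simp

lemma integral_dot_sq {α : Type*} [MeasurableSpace α] (μ : Measure α) [IsProbabilityMeasure μ]
    {dd : ℕ} (φ : α → Fin dd → ℝ) (hφ : Measurable φ) (hφb : ∀ x, ∑ i, φ x i ^ 2 ≤ 1)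
    (w : Fin dd → ℝ) :
    ∫ x, (φ x ⬝ᵥ w) ^ 2 ∂μ = w ⬝ᵥ (Matrix.of fun i j => ∫ x, φ x i * φ x j ∂μ).mulVec w := by
  classical
  have hmi : ∀ i, Measurable fun x => φ x i := fun i => (measurable_pi_apply i).comp hφ
  have hb : ∀ x i, |φ x i| ≤ 1 := by
    intro x i
    have h1 : φ x i ^ 2 ≤ 1 := le_trans (Finset.single_le_sum (f := fun i => φ x i ^ 2)
      (fun j _ => sq_nonneg _) (Finset.mem_univ i)) (hφb x)
    nlinarith [abs_nonneg (φ x i), sq_abs (φ x i)]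
  have hint : ∀ i j, Integrable (fun x => (φ x i * w i) * (φ x j * w j)) μ := by
    intro i j
    refine integrable_of_bdd' (((hmi i).mul_const _).mul ((hmi j).mul_const _))
      (C := |w i| * |w j|) ?_
    intro x
    rw [abs_mul, abs_mul, abs_mul]
    have h3 : |φ x i| * |w i| ≤ 1 * |w i| :=
      mul_le_mul_of_nonneg_right (hb x i) (abs_nonneg _)
    have h4 : |φ x j| * |w j| ≤ 1 * |w j| :=
      mul_le_mul_of_nonneg_right (hb x j) (abs_nonneg _)
    calc |φ x i| * |w i| * (|φ x j| * |w j|) ≤ (1 * |w i|) * (1 * |w j|) :=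
          mul_le_mul h3 h4 (by positivity) (by positivity)
      _ = |w i| * |w j| := by ring
  have lhs_eq : ∀ x, (φ x ⬝ᵥ w) ^ 2 = ∑ i, ∑ j, (φ x i * w i) * (φ x j * w j) := by
    intro x
    rw [dotProduct, sq, Finset.sum_mul_sum]
  simp_rw [lhs_eq]
  rw [integral_finset_sum _ (fun i _ => integrable_finset_sum _ (fun j _ => hint i j))]
  have hsw : ∀ i, ∫ x, ∑ j, (φ x i * w i) * (φ x j * w j) ∂μ
      = ∑ j, ∫ x, (φ x i * w i) * (φ x j * w j) ∂μ :=
    fun i => integral_finset_sum _ (fun j _ => hint i j)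
  simp_rw [hsw]
  have hterm : ∀ i j, ∫ x, (φ x i * w i) * (φ x j * w j) ∂μ
      = w i * ((∫ x, φ x i * φ x j ∂μ) * w j) := by
    intro i j
    have hre : ∀ x, (φ x i * w i) * (φ x j * w j) = (w i * w j) * (φ x i * φ x j) :=
      fun x => by ring
    simp_rw [hre]
    rw [integral_const_mul]
    ring
  simp_rw [hterm]
  simp [dotProduct, Matrix.mulVec, Matrix.of_apply, Finset.mul_sum]

end Helpers


open Matrix in
/-- compatibility of the linear metric. -/
theorem linear_metric_compatibility
    (H : ℕ) (hH : 2 ≤ H)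
    (ξ : Measure S) [IsProbabilityMeasure ξ]
    (P : ℕ → Kernel (S × A) S) [∀ h, IsMarkovKernel (P h)]
    (r : ℕ → S × A → ℝ) (hr : ∀ h ∈ Finset.Icc 1 H, BddMeas (r h))
    (πs : ℕ → S → A) (hπs : ∀ h, Measurable (πs h))
    (hπsGreedy : IsGreedy H (fun h => qstar P r H h) πs)
    (dd : ℕ) (hdd : 1 ≤ dd)
    (φ : S × A → Fin dd → ℝ) (hφmeas : Measurable φ)
    (hφbdd : ∀ sa : S × A, ∑ i, φ sa i ^ 2 ≤ 1)
    (hcov : ∀ h ∈ Finset.Icc 1 H, (covMat dd ξ P πs φ h).PosDef)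
    (hqlin : ∀ h ∈ Finset.Icc 1 H, qstar P r H h ∈ linF dd φ)
    (hqpos : ∀ h ∈ Finset.Icc 1 H, 0 < onorm ξ P πs h (qstar P r H h))
    (κ : ℕ → S → ℝ)
    (hκ : ∀ h, Measurable (κ h) ∧ (∀ s, 0 ≤ κ h s) ∧ ∃ C : ℝ, ∀ s, κ h s ≤ C)
    -- curvature condition (Curv1)
    (hCurv1 : ∀ h ∈ Finset.Icc 1 (H - 1), ∀ w : Fin dd → ℝ, ∀ πh : S → A,
      Measurable πh →
      (∀ s : S, φ (s, πh s) ⬝ᵥ w = ⨆ a : A, φ (s, a) ⬝ᵥ w) →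
      ∀ s : S,
        mnorm (covMat dd ξ P πs φ h)⁻¹ (φ (s, πh s) - φ (s, πs h s)) ≤
          κ h s * Real.sqrt dd *
            onorm ξ P πs h (fun sa => φ sa ⬝ᵥ w - qstar P r H h sa) /
              onorm ξ P πs h (qstar P r H h))
    (f : ℕ → S × A → ℝ) (hfF : ∀ h ∈ Finset.Icc 1 H, f h ∈ linF dd φ)
    (π : ℕ → S → A) (hπ : ∀ h, Measurable (π h)) (hgreedy : IsGreedy H f π)
    (h : ℕ) (hh : h ∈ Finset.Icc 2 (H - 1))
    (g : S × A → ℝ) (hg : g ∈ linF dd φ) (hgpos : 0 < onorm ξ P πs h g) :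
    onorm ξ P πs (h - 1)
        (fun sa => Ppol P π (h - 1) g sa - Ppol P πs (h - 1) g sa) ≤
      dlin dd ξ P πs r H κ h (f h) (qstar P r H h) * onorm ξ P πs h g := by
  classical
  obtain ⟨hh2, hhH⟩ := Finset.mem_Icc.mp hh
  obtain ⟨n, rfl⟩ : ∃ n, h = n + 2 := ⟨h - 2, by omega⟩
  have hmem1H : n + 2 ∈ Finset.Icc 1 H := Finset.mem_Icc.mpr ⟨by omega, by omega⟩
  have hmem1H1 : n + 2 ∈ Finset.Icc 1 (H - 1) := Finset.mem_Icc.mpr ⟨by omega, hhH⟩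
  obtain ⟨wf, hwf⟩ := hfF (n + 2) hmem1H
  obtain ⟨wg, hwg⟩ := hg
  obtain ⟨hκm, hκ0, Cκ, hκC⟩ := hκ (n + 2)
  have hκabs : ∀ s, |κ (n + 2) s| ≤ Cκ := fun s => by
    rw [abs_of_nonneg (hκ0 s)]; exact hκC s
  -- probability measures
  haveI hprob1 : IsProbabilityMeasure (occ ξ P πs (n + 1)) :=
    occAux_isProb ξ P πs hπs n
  haveI hprob2 : IsProbabilityMeasure (occ ξ P πs (n + 2)) :=
    occAux_isProb ξ P πs hπs (n + 1)
  -- basic measurability / bounds for g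
  have hmi : ∀ i, Measurable fun x : S × A => φ x i :=
    fun i => (measurable_pi_apply i).comp hφmeas
  have hφb1 : ∀ (x : S × A) i, |φ x i| ≤ 1 := by
    intro x i
    have h1 : φ x i ^ 2 ≤ 1 := le_trans (Finset.single_le_sum (f := fun i => φ x i ^ 2)
      (fun j _ => sq_nonneg _) (Finset.mem_univ i)) (hφbdd x)
    nlinarith [abs_nonneg (φ x i), sq_abs (φ x i)]
  have hgmeas : Measurable g := by
    rw [hwg]
    simp only [dotProduct]
    exact Finset.measurable_sum _ fun i _ => (hmi i).mul_const _
  set Cg : ℝ := ∑ i, |wg i| with hCg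
  have hgbdd : ∀ x, |g x| ≤ Cg := by
    intro x
    rw [hwg, hCg]
    calc |φ x ⬝ᵥ wg| ≤ ∑ i, |φ x i * wg i| := Finset.abs_sum_le_sum_abs _ _
      _ ≤ ∑ i, |wg i| := Finset.sum_le_sum fun i _ => by
          rw [abs_mul]
          exact mul_le_of_le_one_left (abs_nonneg _) (hφb1 x i)
  -- key abbreviations
  set Mcov := covMat dd ξ P πs φ (n + 2) with hMcov
  have hMpd : Mcov.PosDef := hcov _ hmem1H
  set Qn := onorm ξ P πs (n + 2) (qstar P r H (n + 2)) with hQn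
  have hQpos : 0 < Qn := hqpos _ hmem1H
  set D := onorm ξ P πs (n + 2) (fun sa => f (n + 2) sa - qstar P r H (n + 2) sa) with hD
  set Gn := onorm ξ P πs (n + 2) g with hGn
  have hD0 : 0 ≤ D := Real.sqrt_nonneg _
  have hGn0 : 0 ≤ Gn := Real.sqrt_nonneg _
  set kb := kbar ξ P πs κ (n + 2) with hkb
  have hkb0 : 0 ≤ kb := Real.sqrt_nonneg _
  -- onorm of linear functions equals the covariance norm
  have hcovlink : ∀ w : Fin dd → ℝ,
      onorm ξ P πs (n + 2) (fun sa => φ sa ⬝ᵥ w) = mnorm Mcov w := by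
    intro w
    rw [onorm, mnorm, hMcov, covMat]
    congr 1
    exact integral_dot_sq _ φ hφmeas hφbdd w
  -- curvature instantiation
  have hgreedyφ : ∀ s : S, φ (s, π (n + 2) s) ⬝ᵥ wf = ⨆ a : A, φ (s, a) ⬝ᵥ wf := by
    intro s
    have hgr := hgreedy (n + 2) hmem1H s
    rw [hwf] at hgr
    exact hgr
  have hcurv := hCurv1 (n + 2) hmem1H1 wf (π (n + 2)) (hπ (n + 2)) hgreedyφ
  have hDeq : onorm ξ P πs (n + 2) (fun sa => φ sa ⬝ᵥ wf - qstar P r H (n + 2) sa) = D := by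
    rw [hD, hwf]
  -- pointwise bound on u
  set u : S → ℝ := fun s' => g (s', π (n + 2) s') - g (s', πs (n + 2) s') with hu
  have humeas : Measurable u :=
    (hgmeas.comp (measurable_id.prodMk (hπ _))).sub
      (hgmeas.comp (measurable_id.prodMk (hπs _)))
  have hubdd : ∀ s', |u s'| ≤ Cg + Cg := fun s' =>
    le_trans (abs_sub _ _) (add_le_add (hgbdd _) (hgbdd _))
  set B : ℝ := Real.sqrt dd * D / Qn * Gn with hB
  have hB0 : 0 ≤ B := by
    rw [hB]
    have : (0:ℝ) ≤ Real.sqrt dd * D / Qn :=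
      div_nonneg (mul_nonneg (Real.sqrt_nonneg _) hD0) hQpos.le
    exact mul_nonneg this hGn0
  have hub : ∀ s', |u s'| ≤ κ (n + 2) s' * B := by
    intro s'
    have h1 : u s' = (φ (s', π (n + 2) s') - φ (s', πs (n + 2) s')) ⬝ᵥ wg := by
      rw [hu, hwg]
      simp [sub_dotProduct]
    have hGneq : mnorm Mcov wg = Gn := by
      rw [← hcovlink wg, hGn, hwg]
    have hc := hcurv s'
    rw [hDeq] at hc
    calc |u s'| = |(φ (s', π (n + 2) s') - φ (s', πs (n + 2) s')) ⬝ᵥ wg| := by rw [h1]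
      _ ≤ mnorm Mcov⁻¹ (φ (s', π (n + 2) s') - φ (s', πs (n + 2) s')) * mnorm Mcov wg :=
          pd_abs_dot_le hMpd _ _
      _ ≤ (κ (n + 2) s' * Real.sqrt dd * D / Qn) * Gn := by
          rw [hGneq]
          exact mul_le_mul_of_nonneg_right hc hGn0
      _ = κ (n + 2) s' * B := by rw [hB]; ring
  -- the difference function Δ and its bound
  set Δ : S × A → ℝ := fun sa => Ppol P π (n + 1) g sa - Ppol P πs (n + 1) g sa with hΔ
  have hint_gπ : ∀ (τ : ℕ → S → A) (hτ : ∀ m, Measurable (τ m)) (sa : S × A),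
      Integrable (fun s' => g (s', τ (n + 2) s')) ((P (n + 1)) sa) :=
    fun τ hτ sa => integrable_of_bdd' (hgmeas.comp (measurable_id.prodMk (hτ _)))
      (C := Cg) (fun s' => hgbdd _)
  have hΔeq : ∀ sa, Δ sa = ∫ s', u s' ∂((P (n + 1)) sa) := by
    intro sa
    rw [hΔ]
    simp only [Ppol]
    rw [← integral_sub (hint_gπ π hπ sa) (hint_gπ πs hπs sa)]
  set k1 : S × A → ℝ := fun sa => ∫ s', κ (n + 2) s' ∂((P (n + 1)) sa) with hk1
  have hk1meas : Measurable k1 := by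
    have hsm : StronglyMeasurable fun p : (S × A) × S => κ (n + 2) p.2 :=
      (hκm.comp measurable_snd).stronglyMeasurable
    exact hsm.integral_kernel_prod_right'.measurable
  have hk1nonneg : ∀ sa, 0 ≤ k1 sa := fun sa => integral_nonneg fun s' => hκ0 s'
  have hk1bdd : ∀ sa, |k1 sa| ≤ Cκ := fun sa => abs_integral_le_of_bdd _ hκm hκabs
  have hΔmeas : Measurable Δ := by
    have hm1 : ∀ (τ : ℕ → S → A), (∀ m, Measurable (τ m)) →
        Measurable (Ppol P τ (n + 1) g) := by
      intro τ hτ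
      have hsm : StronglyMeasurable fun p : (S × A) × S => g (p.2, τ (n + 2) p.2) :=
        (hgmeas.comp ((measurable_snd).prodMk ((hτ _).comp measurable_snd))).stronglyMeasurable
      exact hsm.integral_kernel_prod_right'.measurable
    exact (hm1 π hπ).sub (hm1 πs hπs)
  have hΔbdd : ∀ sa, |Δ sa| ≤ Cg + Cg := by
    intro sa
    rw [hΔeq sa]
    exact abs_integral_le_of_bdd _ humeas hubdd
  have hΔle : ∀ sa, |Δ sa| ≤ B * k1 sa := by
    intro sa
    rw [hΔeq sa]
    calc |∫ s', u s' ∂((P (n + 1)) sa)| ≤ ∫ s', |u s'| ∂((P (n + 1)) sa) := by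
          simpa [Real.norm_eq_abs] using norm_integral_le_integral_norm (μ := (P (n + 1)) sa) u
      _ ≤ ∫ s', B * κ (n + 2) s' ∂((P (n + 1)) sa) := by
          refine integral_mono (integrable_of_bdd' humeas.abs (C := Cg + Cg)
            (fun s' => by simpa [abs_abs] using hubdd s'))
            ((integrable_of_bdd' hκm (C := Cκ) hκabs).const_mul B) (fun s' => ?_)
          calc |u s'| ≤ κ (n + 2) s' * B := hub s'
            _ = B * κ (n + 2) s' := by ring
      _ = B * k1 sa := by rw [integral_const_mul, hk1]
  -- inner second-moment function
  set K2 : S × A → ℝ := fun sa => ∫ s', κ (n + 2) s' ^ 2 ∂((P (n + 1)) sa) with hK2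
  have hκ2meas : Measurable fun s' => κ (n + 2) s' ^ 2 := hκm.pow_const 2
  have hκ2abs : ∀ s', |κ (n + 2) s' ^ 2| ≤ Cκ ^ 2 := fun s' => by
    rw [abs_pow]
    exact pow_le_pow_left₀ (abs_nonneg _) (hκabs s') 2
  have hK2meas : Measurable K2 := by
    have hsm : StronglyMeasurable fun p : (S × A) × S => κ (n + 2) p.2 ^ 2 :=
      (hκ2meas.comp measurable_snd).stronglyMeasurable
    exact hsm.integral_kernel_prod_right'.measurable
  have hK2bdd : ∀ sa, |K2 sa| ≤ Cκ ^ 2 := fun sa =>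
    abs_integral_le_of_bdd _ hκ2meas hκ2abs
  -- occupation measure recursion
  have hemb : Measurable fun s' : S => (s', πs (n + 2) s') := measurable_id.prodMk (hπs _)
  set κmap := Kernel.map (P (n + 1)) (fun s' : S => (s', πs (n + 2) s')) with hκmap
  haveI : IsMarkovKernel κmap := Kernel.IsMarkovKernel.map _ hemb
  have hocc : occ ξ P πs (n + 2) = (occ ξ P πs (n + 1)).bind κmap := by
    show occAux ξ P πs (n + 1) = _
    rw [occAux]
    congr 1
    funext sa
    rw [hκmap, Kernel.map_apply _ hemb]
  -- step 4: the bind identity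
  have hstep4 : ∫ sa, κ (n + 2) sa.1 ^ 2 ∂(occ ξ P πs (n + 2))
      = ∫ sa, K2 sa ∂(occ ξ P πs (n + 1)) := by
    have hfm : Measurable fun sa : S × A => κ (n + 2) sa.1 ^ 2 :=
      (hκm.comp measurable_fst).pow_const 2
    rw [hocc, integral_bind_kernel _ κmap hfm (fun x => sq_nonneg _)
      (C := Cκ ^ 2) (fun x => by
        have := hκ2abs x.1
        rw [abs_of_nonneg (sq_nonneg _)] at this
        exact this)]
    congr 1
    funext sa
    rw [hκmap, Kernel.map_apply _ hemb,
      integral_map hemb.aemeasurable hfm.aestronglyMeasurable]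
  -- main chain of inequalities
  have hmain : ∫ sa, Δ sa ^ 2 ∂(occ ξ P πs (n + 1))
      ≤ B ^ 2 * ∫ sa, κ (n + 2) sa.1 ^ 2 ∂(occ ξ P πs (n + 2)) := by
    have hintΔ2 : Integrable (fun sa => Δ sa ^ 2) (occ ξ P πs (n + 1)) :=
      integrable_of_bdd' (hΔmeas.pow_const 2) (C := (Cg + Cg) ^ 2) (fun sa => by
        rw [abs_pow]
        exact pow_le_pow_left₀ (abs_nonneg _) (hΔbdd sa) 2)
    have hintk12 : Integrable (fun sa => B ^ 2 * k1 sa ^ 2) (occ ξ P πs (n + 1)) :=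
      (integrable_of_bdd' (hk1meas.pow_const 2) (C := Cκ ^ 2) (fun sa => by
        rw [abs_pow]
        exact pow_le_pow_left₀ (abs_nonneg _) (hk1bdd sa) 2)).const_mul _
    have hintK2 : Integrable (fun sa => B ^ 2 * K2 sa) (occ ξ P πs (n + 1)) :=
      (integrable_of_bdd' hK2meas (C := Cκ ^ 2) hK2bdd).const_mul _
    calc ∫ sa, Δ sa ^ 2 ∂(occ ξ P πs (n + 1))
        ≤ ∫ sa, B ^ 2 * k1 sa ^ 2 ∂(occ ξ P πs (n + 1)) := by
          refine integral_mono hintΔ2 hintk12 (fun sa => ?_)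
          have h1 : Δ sa ^ 2 = |Δ sa| ^ 2 := (sq_abs _).symm
          rw [h1]
          calc |Δ sa| ^ 2 ≤ (B * k1 sa) ^ 2 :=
                pow_le_pow_left₀ (abs_nonneg _) (hΔle sa) 2
            _ = B ^ 2 * k1 sa ^ 2 := by ring
      _ ≤ ∫ sa, B ^ 2 * K2 sa ∂(occ ξ P πs (n + 1)) := by
          refine integral_mono hintk12 hintK2 (fun sa => ?_)
          refine mul_le_mul_of_nonneg_left ?_ (sq_nonneg B)
          rw [hk1, hK2]
          exact sq_integral_le' hκm hκabs
      _ = B ^ 2 * ∫ sa, K2 sa ∂(occ ξ P πs (n + 1)) := integral_const_mul _ _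
      _ = B ^ 2 * ∫ sa, κ (n + 2) sa.1 ^ 2 ∂(occ ξ P πs (n + 2)) := by rw [hstep4]
  -- conclusion
  have hκ2int : 0 ≤ ∫ sa, κ (n + 2) sa.1 ^ 2 ∂(occ ξ P πs (n + 2)) :=
    integral_nonneg fun sa => sq_nonneg _
  show onorm ξ P πs (n + 1) (fun sa => Ppol P π (n + 1) g sa - Ppol P πs (n + 1) g sa)
      ≤ dlin dd ξ P πs r H κ (n + 2) (f (n + 2)) (qstar P r H (n + 2)) * Gn
  calc onorm ξ P πs (n + 1) (fun sa => Ppol P π (n + 1) g sa - Ppol P πs (n + 1) g sa)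
      = Real.sqrt (∫ sa, Δ sa ^ 2 ∂(occ ξ P πs (n + 1))) := by rw [onorm, hΔ]
    _ ≤ Real.sqrt (B ^ 2 * ∫ sa, κ (n + 2) sa.1 ^ 2 ∂(occ ξ P πs (n + 2))) :=
        Real.sqrt_le_sqrt hmain
    _ = B * kb := by
        rw [Real.sqrt_mul (sq_nonneg B), Real.sqrt_sq hB0, hkb, kbar]
    _ = dlin dd ξ P πs r H κ (n + 2) (f (n + 2)) (qstar P r H (n + 2)) * Gn := by
        rw [dlin, hB, ← hD, ← hQn, ← hkb]
        field_simp


end RLStability
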